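/- Let Φ = (G, φ) be a T-gain graph on a complete bipartite graph G. If there exists a vertex v such that every 4-cycle passing through v has gain 1, then Φ is balanced. -/

import Mathlib

open Matrix BigOperators
open scoped Classical ComplexOrder

/-- The positive semidefinite square root of a positive semidefinite matrix
(the definition Mathlib had in December 2024, since removed). -/
noncomputable def Matrix.PosSemidef.sqrt {n 𝕜 : Type*} [Fintype n] [DecidableEq n] [RCLike 𝕜]
    {A : Matrix n n 𝕜} (hA : A.PosSemidef) : Matrix n n 𝕜 :=
  hA.1.eigenvectorUnitary.1 * diagonal ((↑) ∘ (fun x : ℝ => √x) ∘ hA.1.eigenvalues) *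
  (star hA.1.eigenvectorUnitary : Matrix n n 𝕜)

/-- A complex unit gain graph (`𝕋`-gain graph) on a finite vertex type `V`. -/
structure TGainGraph (V : Type*) [Fintype V] [DecidableEq V] where
  G : SimpleGraph V
  A : Matrix V V ℂ
  herm : A.IsHermitian
  unitGain : ∀ i j, G.Adj i j → ‖A i j‖ = 1
  zeroGain : ∀ i j, ¬ G.Adj i j → A i j = 0

namespace TGainGraph

variable {V : Type*} [Fintype V] [DecidableEq V]

/-- The energy of a `𝕋`-gain graph: sum of absolute values of eigenvalues of `A(Φ)`. -/
noncomputable def energy (Φ : TGainGraph V) : ℝ :=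
  ∑ i, |Φ.herm.eigenvalues i|

/-- `|A(Φ)| = (A(Φ) A(Φ)ᴴ)^{1/2}`. -/
noncomputable def absMatrix (Φ : TGainGraph V) : Matrix V V ℂ :=
  (Matrix.posSemidef_self_mul_conjTranspose Φ.A).sqrt

/-- Energy of a vertex: the `(i,i)` entry of `|A(Φ)|`. -/
noncomputable def vertexEnergy (Φ : TGainGraph V) (i : V) : ℝ :=
  (Φ.absMatrix i i).re

/-- Degree of a vertex in the underlying graph. -/
noncomputable def deg (Φ : TGainGraph V) (i : V) : ℕ := Φ.G.degree i

/-- Maximum vertex degree of the underlying graph. -/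
noncomputable def maxDeg (Φ : TGainGraph V) : ℕ := Φ.G.maxDegree

/-- Spectral radius of `A(Φ)`. -/
noncomputable def specRadius (Φ : TGainGraph V) : ℝ :=
  ⨆ i, |Φ.herm.eigenvalues i|

/-- Switching equivalence of two gain graphs on the same vertex set: same
underlying graph, and adjacency matrices conjugate by a diagonal unitary. -/
def SwitchEquiv (Φ₁ Φ₂ : TGainGraph V) : Prop :=
  Φ₁.G = Φ₂.G ∧ ∃ U : Matrix V V ℂ, U.IsDiag ∧ U ∈ Matrix.unitaryGroup V ℂ ∧
    Φ₁.A = U * Φ₂.A * Uᴴ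

/-- `Φ` switches to the all-ones gain on its underlying graph,
i.e. `Φ ∼ (G, 1)` (equivalently, `Φ` is balanced). -/
def SwitchesToOne (Φ : TGainGraph V) : Prop :=
  ∃ U : Matrix V V ℂ, U.IsDiag ∧ U ∈ Matrix.unitaryGroup V ℂ ∧
    Φ.A = U * (Φ.G.adjMatrix ℂ) * Uᴴ

/-- `Φ ∼ (K_{a,b}, 1)`: the underlying graph is (isomorphic to) the complete
bipartite graph `K_{a,b}` via some bijection `e`, and the gains switch to `1`. -/
def SwitchEquivToCompleteBipartite (Φ : TGainGraph V) (a b : ℕ) : Prop :=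
  (∃ e : V ≃ (Fin a ⊕ Fin b), ∀ i j, Φ.G.Adj i j ↔
      (completeBipartiteGraph (Fin a) (Fin b)).Adj (e i) (e j)) ∧
  SwitchesToOne Φ

/-- The gain of a walk: the product of the gains of its edges in order. -/
noncomputable def walkGain (Φ : TGainGraph V) {u v : V} (w : Φ.G.Walk u v) : ℂ :=
  (w.darts.map (fun d => Φ.A d.fst d.snd)).prod

/-- A gain graph is balanced if every cycle has gain `1`. -/
def Balanced (Φ : TGainGraph V) : Prop :=
  ∀ (u : V) (w : Φ.G.Walk u u), w.IsCycle → Φ.walkGain w = 1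

/-- The restriction of a gain graph to a set of vertices. -/
noncomputable def restrict (Φ : TGainGraph V) (s : Set V) : TGainGraph s where
  G := Φ.G.induce s
  A := Φ.A.submatrix (Subtype.val) (Subtype.val)
  herm := Φ.herm.submatrix _
  unitGain := fun i j h => Φ.unitGain i j h
  zeroGain := fun i j h => Φ.zeroGain i j h

/-- The vertex set of the connected component `c`. -/
def componentSet (Φ : TGainGraph V) (c : Φ.G.ConnectedComponent) : Set V :=
  {v | Φ.G.connectedComponentMk v = c}

/-- Every connected component of `Φ` is either an isolated vertex or a balanced
complete bipartite gain graph `(K_{k,k},1)` with a perfect matching. -/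
def ComponentsBalancedCompleteBipartitePM (Φ : TGainGraph V) : Prop :=
  ∀ c : Φ.G.ConnectedComponent,
    (∀ v ∈ Φ.componentSet c, ∀ w, ¬ Φ.G.Adj v w) ∨
    ∃ k : ℕ, 0 < k ∧
      (Φ.restrict (Φ.componentSet c)).SwitchEquivToCompleteBipartite k k

/-- The matching number of a graph. -/
noncomputable def matchingNumber (G : SimpleGraph V) : ℕ :=
  sSup {k | ∃ M : G.Subgraph, M.IsMatching ∧ M.edgeSet.ncard = k}

/-- The vertex cover number of a graph. -/
noncomputable def coverNumber (G : SimpleGraph V) : ℕ :=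
  sInf {k | ∃ s : Finset V, s.card = k ∧ ∀ i j, G.Adj i j → i ∈ s ∨ j ∈ s}

/-- The number of odd cycles of a graph (counted by their edge sets). -/
noncomputable def oddCycleCount (G : SimpleGraph V) : ℕ :=
  Set.ncard {s : Set (Sym2 V) | ∃ (u : V) (w : G.Walk u u),
    w.IsCycle ∧ Odd w.length ∧ s = {e | e ∈ w.edges}}

end TGainGraph

/-!
If the gains factor as `φ(p, q) = θ p * conj (θ q)` with `‖θ‖ = 1`, the gain of a closed walk
telescopes to `‖θ u‖ ^ 2 = 1`. In a complete bipartite graph, fix a neighbour `y` of `v` and let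
`θ x` be the gain of the path `x y v` or of the edge `x v`, according to the side of `x`.
For an edge `p q` with `p` on the side of `v`, the 4-cycle `v q p y` through `v` (degenerate
when `p = v` or `q = y`) gives exactly `φ(p, q) = θ p * conj (θ q)`.
-/

open ComplexConjugate

namespace SimpleGraph

lemma completeBipartiteGraph_adj_iff_isLeft_ne {α β : Type*} {x y : α ⊕ β} :
    (completeBipartiteGraph α β).Adj x y ↔ x.isLeft ≠ y.isLeft := by
  cases x <;> cases y <;> simp

end SimpleGraph

namespace TGainGraph

variable {V : Type*} [Fintype V] [DecidableEq V] (Φ : TGainGraph V)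

lemma A_swap (p q : V) : Φ.A q p = conj (Φ.A p q) :=
  (Φ.herm.apply q p).symm

lemma A_mul_A_swap {p q : V} (h : Φ.G.Adj p q) : Φ.A p q * Φ.A q p = 1 := by
  simp [A_swap Φ p q, Complex.mul_conj', Φ.unitGain p q h]

@[simp]
lemma walkGain_nil {u : V} : Φ.walkGain (.nil : Φ.G.Walk u u) = 1 := rfl

@[simp]
lemma walkGain_cons {u v w : V} (h : Φ.G.Adj u v) (p : Φ.G.Walk v w) :
    Φ.walkGain (.cons h p) = Φ.A u v * Φ.walkGain p := by
  simp [walkGain]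

lemma walkGain_eq_mul_conj_of_adj_eq {θ : V → ℂ} (hnorm : ∀ x, ‖θ x‖ = 1)
    (hθ : ∀ p q, Φ.G.Adj p q → Φ.A p q = θ p * conj (θ q)) {u x : V} (w : Φ.G.Walk u x) :
    Φ.walkGain w = θ u * conj (θ x) := by
  induction w with
  | nil => simp [Complex.mul_conj', hnorm]
  | @cons s t r h p ih =>
    have hunit : conj (θ t) * θ t = 1 := by simp [Complex.conj_mul', hnorm]
    rw [walkGain_cons, ih, hθ s t h]
    linear_combination (θ s * conj (θ r)) * hunit

lemma balanced_of_adj_eq_mul_conj {θ : V → ℂ} (hnorm : ∀ x, ‖θ x‖ = 1)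
    (hθ : ∀ p q, Φ.G.Adj p q → Φ.A p q = θ p * conj (θ q)) : Φ.Balanced := by
  intro u w _
  simp [walkGain_eq_mul_conj_of_adj_eq Φ hnorm hθ, Complex.mul_conj', hnorm]

lemma A_eq_of_four_cycles_through {v : V}
    (h4 : ∀ w : Φ.G.Walk v v, w.IsCycle → w.length = 4 → Φ.walkGain w = 1) {p q y : V}
    (hvq : Φ.G.Adj v q) (hqp : Φ.G.Adj q p) (hpy : Φ.G.Adj p y) (hyv : Φ.G.Adj y v) :
    Φ.A p q = Φ.A p y * Φ.A y v * Φ.A v q := by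
  by_cases hpv : p = v
  · subst hpv
    rw [Φ.A_mul_A_swap hpy, one_mul]
  by_cases hqy : q = y
  · subst hqy
    rw [mul_assoc, Φ.A_mul_A_swap hyv, mul_one]
  have hcycle : (SimpleGraph.Walk.cons hvq (.cons hqp (.cons hpy (.cons hyv .nil)))).IsCycle := by
    simp [SimpleGraph.Walk.cons_isCycle_iff]
    grind [SimpleGraph.Adj.ne]
  have hgain := h4 _ hcycle rfl
  simp only [walkGain_cons, walkGain_nil] at hgain
  linear_combination
    (-Φ.A p q) * hgain + (Φ.A p y * Φ.A y v * Φ.A v q) * Φ.A_mul_A_swap hqp.symm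

section SideFunction

variable {Φ} {side : V → Bool} (hside : ∀ i j, Φ.G.Adj i j ↔ side i ≠ side j)
include hside

lemma exists_adj_of_side_adj {p q : V} (hpq : Φ.G.Adj p q) (v : V) : ∃ y, Φ.G.Adj v y := by
  rw [hside] at hpq
  by_cases hp : side v = side p
  · exact ⟨q, (hside v q).2 (hp ▸ hpq)⟩
  · exact ⟨p, (hside v p).2 hp⟩

variable (Φ side) in
def sidePotential (v y x : V) : ℂ :=
  if side x = side v then Φ.A x y * Φ.A y v else Φ.A x v

lemma norm_sidePotential {v y : V} (hvy : Φ.G.Adj v y) (x : V) :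
    ‖sidePotential Φ side v y x‖ = 1 := by
  unfold sidePotential
  split_ifs with hx
  · have hxy : Φ.G.Adj x y := (hside x y).2 (hx ▸ (hside v y).1 hvy)
    rw [norm_mul, Φ.unitGain x y hxy, Φ.unitGain y v hvy.symm, one_mul]
  · exact Φ.unitGain x v ((hside x v).2 hx)

lemma A_eq_sidePotential_mul_conj {v y : V}
    (h4 : ∀ w : Φ.G.Walk v v, w.IsCycle → w.length = 4 → Φ.walkGain w = 1)
    (hvy : Φ.G.Adj v y) {p q : V} (hpq : Φ.G.Adj p q) :
    Φ.A p q = sidePotential Φ side v y p * conj (sidePotential Φ side v y q) := by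
  wlog hp : side p = side v generalizing p q
  · have hq : side q = side v := by
      have := (hside p q).1 hpq
      revert hp this; cases side p <;> cases side q <;> cases side v <;> simp
    rw [A_swap Φ q p, this hpq.symm hq, map_mul, Complex.conj_conj, mul_comm]
  have hq : side q ≠ side v := hp ▸ ((hside p q).1 hpq).symm
  rw [sidePotential, sidePotential, if_pos hp, if_neg hq, ← A_swap]
  exact Φ.A_eq_of_four_cycles_through h4 ((hside v q).2 hq.symm) hpq.symm
    ((hside p y).2 (hp ▸ (hside v y).1 hvy)) hvy.symm

end SideFunction

end TGainGraph

open TGainGraph in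
/-- If `G` is complete bipartite and every 4-cycle through some fixed vertex `v`
has gain 1, then `Φ` is balanced. -/
theorem balanced_of_four_cycles_through_vertex {V : Type*} [Fintype V] [DecidableEq V]
    (Φ : TGainGraph V) (a b : ℕ)
    (hcb : ∃ e : V ≃ (Fin a ⊕ Fin b), ∀ i j, Φ.G.Adj i j ↔
      (completeBipartiteGraph (Fin a) (Fin b)).Adj (e i) (e j))
    (v : V)
    (h4 : ∀ w : Φ.G.Walk v v, w.IsCycle → w.length = 4 → Φ.walkGain w = 1) :
    Φ.Balanced := by
  obtain ⟨e, he⟩ := hcb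
  have hside : ∀ i j, Φ.G.Adj i j ↔ (e i).isLeft ≠ (e j).isLeft := fun i j =>
    (he i j).trans SimpleGraph.completeBipartiteGraph_adj_iff_isLeft_ne
  intro u w hw
  obtain ⟨y, hvy⟩ := exists_adj_of_side_adj hside (w.adj_snd hw.not_nil) v
  exact balanced_of_adj_eq_mul_conj Φ (norm_sidePotential hside hvy)
    (fun p q => A_eq_sidePotential_mul_conj hside h4 hvy) u w hw
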